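/- Proposition 2 (Crocco-type theorem for complex fluids, with ∂_νφ eliminated via the substructural balance): For a steady non-isentropic flow of a complex fluid with order-parameter values in ℝᵏ satisfying both the steady momentum balance ρ (Dv)v = div T with T = −p̃ I − T̄^E and the steady substructural balance div S − z = v·grad(∂_ν̇χ) − ∂_νχ, the following pointwise relation holds throughout B for every index i: (ω × v)_i = ϑ ∂_iη − ∂_i h_c − Σ_α ∂_i( ι ( Σ_j ∂_j S_α^j − v·grad((∂_ν̇χ)_α) + (∂_νχ)_α ) ) ν^α − Σ_{α,j} ∂_i((∂_Nφ)_α^j) ∂_jν^α − ι Σ_α ∂_iν^α ( Σ_j ∂_j((∂_Nφ)_α^j) ) − ι Σ_{α,j} (∂_Nφ)_α^j ∂_j∂_iν^α. -/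

import Mathlib

noncomputable section

/-- Points of ℝ³. -/
abbrev V3 : Type := Fin 3 → ℝ

/-- Partial derivative ∂ᵢ of a scalar field on ℝ³. -/
def pd (i : Fin 3) (f : V3 → ℝ) (x : V3) : ℝ :=
  fderiv ℝ f x (Pi.single i 1)

/-- Cross product on ℝ³. -/
def cross (a b : V3) : V3 :=
  ![a 1 * b 2 - a 2 * b 1,
    a 2 * b 0 - a 0 * b 2,
    a 0 * b 1 - a 1 * b 0]

/-- Curl of a vector field on ℝ³. -/
def curl (u : V3 → V3) (x : V3) : V3 :=
  ![pd 1 (fun y => u y 2) x - pd 2 (fun y => u y 1) x,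
    pd 2 (fun y => u y 0) x - pd 0 (fun y => u y 2) x,
    pd 0 (fun y => u y 1) x - pd 1 (fun y => u y 0) x]

/-- A steady complex fluid on an open set `B ⊆ ℝ³` with order-parameter values
in `ℝᵏ`: smooth fields `ρ > 0` (mass density), `η` (entropy), `v` (velocity),
`ν` (order parameter), a smooth potential `φ = φ(ι, n, N, η)` and a smooth
kinetic co-energy `χ = χ(n, ṅ)`. -/
structure ComplexFluid (k : ℕ) where
  B : Set V3
  hB : IsOpen B
  ρ : V3 → ℝ
  η : V3 → ℝ
  v : V3 → V3
  ν : V3 → Fin k → ℝ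
  φ : ℝ × (Fin k → ℝ) × (Fin k → Fin 3 → ℝ) × ℝ → ℝ
  χ : (Fin k → ℝ) × (Fin k → ℝ) → ℝ
  hρ : ContDiffOn ℝ (⊤ : ℕ∞) ρ B
  hη : ContDiffOn ℝ (⊤ : ℕ∞) η B
  hv : ContDiffOn ℝ (⊤ : ℕ∞) v B
  hν : ContDiffOn ℝ (⊤ : ℕ∞) ν B
  hφ : ContDiff ℝ (⊤ : ℕ∞) φ
  hχ : ContDiff ℝ (⊤ : ℕ∞) χ
  hρpos : ∀ x ∈ B, 0 < ρ x

namespace ComplexFluid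

variable {k : ℕ} (K : ComplexFluid k)

/-- Specific volume `ι = 1/ρ`. -/
def ι (x : V3) : ℝ := (K.ρ x)⁻¹

/-- Gradient of the order parameter, components `(Dν)_α^j = ∂_jν^α`. -/
def Dν (x : V3) (α : Fin k) (j : Fin 3) : ℝ := pd j (fun y => K.ν y α) x

/-- The point `(ι(x), ν(x), Dν(x), η(x))` at which `φ` and its partial
derivatives are evaluated. -/
def pt (x : V3) : ℝ × (Fin k → ℝ) × (Fin k → Fin 3 → ℝ) × ℝ :=
  (K.ι x, K.ν x, K.Dν x, K.η x)

/-- `∂_ιφ` evaluated along the fields. -/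
def dφι (x : V3) : ℝ := fderiv ℝ K.φ (K.pt x) (1, 0, 0, 0)

/-- `(∂_νφ)_α` evaluated along the fields. -/
def dφν (x : V3) (α : Fin k) : ℝ := fderiv ℝ K.φ (K.pt x) (0, Pi.single α 1, 0, 0)

/-- `(∂_Nφ)_α^j` evaluated along the fields. -/
def dφN (x : V3) (α : Fin k) (j : Fin 3) : ℝ :=
  fderiv ℝ K.φ (K.pt x) (0, 0, Pi.single α (Pi.single j 1), 0)

/-- Temperature `ϑ = ∂_ηφ` evaluated along the fields. -/
def temp (x : V3) : ℝ := fderiv ℝ K.φ (K.pt x) (0, 0, 0, 1)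

/-- Convective rate `ν̇ = (Dν)v`. -/
def νdot (x : V3) (α : Fin k) : ℝ := ∑ j, K.Dν x α j * K.v x j

/-- `(∂_νχ)_α` evaluated along the fields. -/
def dχν (x : V3) (α : Fin k) : ℝ :=
  fderiv ℝ K.χ (K.ν x, K.νdot x) (Pi.single α 1, 0)

/-- The field `(∂_ν̇χ)_α` evaluated along the fields. -/
def dχνdot (x : V3) (α : Fin k) : ℝ :=
  fderiv ℝ K.χ (K.ν x, K.νdot x) (0, Pi.single α 1)

/-- Pressure `p̃ = −∂_ιφ`. -/
def ptil (x : V3) : ℝ := -(K.dφι x)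

/-- Microstress `S = ρ ∂_Nφ`. -/
def S (x : V3) (α : Fin k) (j : Fin 3) : ℝ := K.ρ x * K.dφN x α j

/-- Self-interaction `z = ρ ∂_νφ`. -/
def z (x : V3) (α : Fin k) : ℝ := K.ρ x * K.dφν x α

/-- Ericksen stress `(T̄^E)_{ij} = Σ_α ∂_iν^α (∂_Nφ)_α^j`. -/
def TE (x : V3) (i j : Fin 3) : ℝ := ∑ α, K.Dν x α i * K.dφN x α j

/-- Specific enthalpy `ξ_c = φ − ι ∂_ιφ − ∂_νφ·ν − ∂_Nφ·Dν`. -/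
def ξc (x : V3) : ℝ :=
  K.φ (K.pt x) - K.ι x * K.dφι x - (∑ α, K.dφν x α * K.ν x α)
    - ∑ α, ∑ j, K.dφN x α j * K.Dν x α j

/-- Total enthalpy `h_c = (1/2)|v|² + ξ_c`. -/
def hc (x : V3) : ℝ := (1 / 2) * (∑ i, (K.v x i) ^ 2) + K.ξc x

/-- Steady momentum balance `ρ (Dv)v = div T` with `T = −p̃ I − T̄^E`
(stated componentwise). -/
def MomentumBalance : Prop :=
  ∀ x ∈ K.B, ∀ i : Fin 3,
    K.ρ x * ∑ j, pd j (fun y => K.v y i) x * K.v x j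
      = ∑ j, pd j (fun y => -(K.ptil y) * (if i = j then (1:ℝ) else 0) - K.TE y i j) x

/-- Steady substructural balance `div S − z = v·grad(∂_ν̇χ) − ∂_νχ`
(stated componentwise on the order-parameter index). -/
def SubstructuralBalance : Prop :=
  ∀ x ∈ K.B, ∀ α : Fin k,
    (∑ j, pd j (fun y => K.S y α j) x) - K.z x α
      = (∑ j, K.v x j * pd j (fun y => K.dχνdot y α) x) - K.dχν x α

end ComplexFluid


/-! Lamb's identity `ω × v = (Dv)v − grad(|v|²/2)` turns the vorticity term into the convective
acceleration, which the momentum balance expresses through `grad ∂_ιφ` and the divergence of the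
Ericksen stress. The chain rule for `φ` along the fields (the Gibbs relation) gives
`grad ξ_c = ϑ grad η − ι grad ∂_ιφ − grad(∂_νφ)·ν − grad(∂_Nφ)·Dν`, so the pressure terms cancel.
Finally the substructural balance says `ι (div S − v·grad ∂_ν̇χ + ∂_νχ) = ι z = ∂_νφ` on the open
set `B`, so both sides have the same partial derivatives. -/

open Topology

section PartialDerivatives

variable {f g : V3 → ℝ} {x : V3}

lemma pd_congr_of_eventuallyEq (h : f =ᶠ[𝓝 x] g) (i : Fin 3) : pd i f x = pd i g x := by
  simp only [pd, h.fderiv_eq]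

lemma pd_add (hf : DifferentiableAt ℝ f x) (hg : DifferentiableAt ℝ g x) (i : Fin 3) :
    pd i (fun y => f y + g y) x = pd i f x + pd i g x := by
  simp [pd, fderiv_fun_add hf hg]

lemma pd_sub (hf : DifferentiableAt ℝ f x) (hg : DifferentiableAt ℝ g x) (i : Fin 3) :
    pd i (fun y => f y - g y) x = pd i f x - pd i g x := by
  simp [pd, fderiv_fun_sub hf hg]

lemma pd_mul (hf : DifferentiableAt ℝ f x) (hg : DifferentiableAt ℝ g x) (i : Fin 3) :
    pd i (fun y => f y * g y) x = pd i f x * g x + f x * pd i g x := by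
  simp only [pd, fderiv_fun_mul hf hg, add_apply, smul_apply, smul_eq_mul]
  ring

lemma pd_const_mul (c : ℝ) (hf : DifferentiableAt ℝ f x) (i : Fin 3) :
    pd i (fun y => c * f y) x = c * pd i f x := by
  rw [pd, pd, fderiv_const_mul hf c]
  rfl

lemma pd_mul_const (c : ℝ) (hf : DifferentiableAt ℝ f x) (i : Fin 3) :
    pd i (fun y => f y * c) x = pd i f x * c := by
  rw [pd, pd, fderiv_mul_const hf c]
  exact mul_comm _ _

lemma pd_sum {ι : Type*} {s : Finset ι} {F : ι → V3 → ℝ}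
    (hF : ∀ a ∈ s, DifferentiableAt ℝ (F a) x) (i : Fin 3) :
    pd i (fun y => ∑ a ∈ s, F a y) x = ∑ a ∈ s, pd i (F a) x := by
  simp [pd, fderiv_fun_sum hF]

lemma pd_sum_mul {ι : Type*} {s : Finset ι} {F G : ι → V3 → ℝ}
    (hF : ∀ a ∈ s, DifferentiableAt ℝ (F a) x) (hG : ∀ a ∈ s, DifferentiableAt ℝ (G a) x)
    (i : Fin 3) :
    pd i (fun y => ∑ a ∈ s, F a y * G a y) x
      = ∑ a ∈ s, (pd i (F a) x * G a x + F a x * pd i (G a) x) := by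
  rw [pd_sum (fun a ha => (hF a ha).fun_mul (hG a ha))]
  exact Finset.sum_congr rfl fun a ha => pd_mul (hF a ha) (hG a ha) i

end PartialDerivatives

lemma cross_curl_apply (u : V3 → V3) (x : V3) (i : Fin 3) :
    cross (curl u x) (u x) i
      = ∑ j, pd j (fun y => u y i) x * u x j - ∑ j, u x j * pd i (fun y => u y j) x := by
  fin_cases i <;> simp [cross, curl, Fin.sum_univ_three] <;> ring

section StateSpace

variable {m n : Type*} [Fintype m] [DecidableEq m] [Fintype n] [DecidableEq n]

lemma ContinuousLinearMap.apply_eq_sum_coord (L : ℝ × (m → ℝ) × (m → n → ℝ) × ℝ →L[ℝ] ℝ)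
    (a : ℝ) (b : m → ℝ) (c : m → n → ℝ) (d : ℝ) :
    L (a, b, c, d)
      = a * L (1, 0, 0, 0) + ∑ α, b α * L (0, Pi.single α 1, 0, 0)
        + ∑ α, ∑ j, c α j * L (0, 0, Pi.single α (Pi.single j 1), 0)
        + d * L (0, 0, 0, 1) := by
  have hdecomp : ((a, b, c, d) : ℝ × (m → ℝ) × (m → n → ℝ) × ℝ)
      = a • (1, 0, 0, 0) + ∑ α, b α • (0, Pi.single α 1, 0, 0)
        + ∑ α, ∑ j, c α j • (0, 0, Pi.single α (Pi.single j 1), 0) + d • (0, 0, 0, 1) := by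
    refine Prod.ext ?_ (Prod.ext ?_ (Prod.ext ?_ ?_))
    · simp [Prod.fst_sum]
    · ext β
      simp [Prod.fst_sum, Prod.snd_sum, Finset.sum_apply, Pi.single_apply]
    · ext β l
      simp [Prod.fst_sum, Prod.snd_sum, Finset.sum_apply, Pi.single_apply]
    · simp [Prod.snd_sum]
  conv_lhs => rw [hdecomp]
  simp only [map_add, map_sum, map_smul, smul_eq_mul]

open ContinuousLinearMap in
lemma fderiv_comp_apply_eq_sum_coord {E : Type*} [NormedAddCommGroup E] [NormedSpace ℝ E]
    {Φ : ℝ × (m → ℝ) × (m → n → ℝ) × ℝ → ℝ} {p : E → ℝ × (m → ℝ) × (m → n → ℝ) × ℝ}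
    {x : E} (hΦ : DifferentiableAt ℝ Φ (p x)) (hp : DifferentiableAt ℝ p x) (e : E) :
    fderiv ℝ (fun y => Φ (p y)) x e
      = fderiv ℝ (fun y => (p y).1) x e * fderiv ℝ Φ (p x) (1, 0, 0, 0)
        + ∑ α, fderiv ℝ (fun y => (p y).2.1 α) x e * fderiv ℝ Φ (p x) (0, Pi.single α 1, 0, 0)
        + ∑ α, ∑ j, fderiv ℝ (fun y => (p y).2.2.1 α j) x e
            * fderiv ℝ Φ (p x) (0, 0, Pi.single α (Pi.single j 1), 0)
        + fderiv ℝ (fun y => (p y).2.2.2) x e * fderiv ℝ Φ (p x) (0, 0, 0, 1) := by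
  have hcoord : ∀ ℓ : (ℝ × (m → ℝ) × (m → n → ℝ) × ℝ) →L[ℝ] ℝ,
      fderiv ℝ (fun y => ℓ (p y)) x e = ℓ (fderiv ℝ p x e) := fun ℓ => by
    rw [fderiv_fun_comp x ℓ.differentiableAt hp, ℓ.fderiv]; rfl
  rw [fderiv_fun_comp x hΦ hp, ContinuousLinearMap.comp_apply,
    ContinuousLinearMap.apply_eq_sum_coord]
  have h₁ : fderiv ℝ (fun y => (p y).1) x e = (fderiv ℝ p x e).1 :=
    hcoord (fst ℝ ℝ _)
  have h₂ (α : m) : fderiv ℝ (fun y => (p y).2.1 α) x e = (fderiv ℝ p x e).2.1 α :=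
    hcoord ((proj α).comp ((fst ℝ _ _).comp (snd ℝ ℝ _)))
  have h₃ (α : m) (j : n) :
      fderiv ℝ (fun y => (p y).2.2.1 α j) x e = (fderiv ℝ p x e).2.2.1 α j :=
    hcoord ((proj j : (n → ℝ) →L[ℝ] ℝ).comp ((proj α).comp
      ((fst ℝ _ _).comp ((snd ℝ _ _).comp (snd ℝ ℝ _)))))
  have h₄ : fderiv ℝ (fun y => (p y).2.2.2) x e = (fderiv ℝ p x e).2.2.2 :=
    hcoord ((snd ℝ _ _).comp ((snd ℝ _ _).comp (snd ℝ ℝ _)))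
  simp only [h₁, h₂, h₃, h₄]

end StateSpace

namespace ComplexFluid

variable {k : ℕ} (K : ComplexFluid k)

lemma contDiffOn_ι : ContDiffOn ℝ (⊤ : ℕ∞) K.ι K.B :=
  K.hρ.inv fun y hy => (K.hρpos y hy).ne'

lemma contDiffOn_Dν : ContDiffOn ℝ (⊤ : ℕ∞) K.Dν K.B :=
  contDiffOn_pi.2 fun α => contDiffOn_pi.2 fun j =>
    (ContinuousLinearMap.apply ℝ ℝ (Pi.single j 1 : V3)).contDiff.comp_contDiffOn
      ((contDiffOn_pi.1 K.hν α).fderiv_of_isOpen K.hB (by exact_mod_cast le_top))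

lemma contDiffOn_pt : ContDiffOn ℝ (⊤ : ℕ∞) K.pt K.B :=
  K.contDiffOn_ι.prodMk (K.hν.prodMk (K.contDiffOn_Dν.prodMk K.hη))

lemma contDiffOn_fderiv_φ_pt (w : ℝ × (Fin k → ℝ) × (Fin k → Fin 3 → ℝ) × ℝ) :
    ContDiffOn ℝ (⊤ : ℕ∞) (fun y => fderiv ℝ K.φ (K.pt y) w) K.B :=
  (ContinuousLinearMap.apply ℝ ℝ w).contDiff.comp_contDiffOn
    ((K.hφ.fderiv_right (by exact_mod_cast le_top)).comp_contDiffOn K.contDiffOn_pt)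

lemma differentiableAt_of_contDiffOn {F : Type*} [NormedAddCommGroup F] [NormedSpace ℝ F]
    {f : V3 → F} {x : V3} (hf : ContDiffOn ℝ (⊤ : ℕ∞) f K.B) (hx : x ∈ K.B) :
    DifferentiableAt ℝ f x :=
  (hf.contDiffAt (K.hB.mem_nhds hx)).differentiableAt (by simp)

variable {K} {x : V3}

lemma differentiableAt_ν (hx : x ∈ K.B) (α : Fin k) :
    DifferentiableAt ℝ (fun y => K.ν y α) x :=
  differentiableAt_pi.1 (K.differentiableAt_of_contDiffOn K.hν hx) α

lemma differentiableAt_v (hx : x ∈ K.B) (j : Fin 3) :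
    DifferentiableAt ℝ (fun y => K.v y j) x :=
  differentiableAt_pi.1 (K.differentiableAt_of_contDiffOn K.hv hx) j

lemma differentiableAt_Dν (hx : x ∈ K.B) (α : Fin k) (j : Fin 3) :
    DifferentiableAt ℝ (fun y => K.Dν y α j) x :=
  differentiableAt_pi.1 (differentiableAt_pi.1
    (K.differentiableAt_of_contDiffOn K.contDiffOn_Dν hx) α) j

lemma differentiableAt_ι (hx : x ∈ K.B) : DifferentiableAt ℝ K.ι x :=
  K.differentiableAt_of_contDiffOn K.contDiffOn_ι hx

lemma differentiableAt_φ_pt (hx : x ∈ K.B) : DifferentiableAt ℝ (fun y => K.φ (K.pt y)) x :=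
  K.differentiableAt_of_contDiffOn (K.hφ.comp_contDiffOn K.contDiffOn_pt) hx

lemma differentiableAt_dφι (hx : x ∈ K.B) : DifferentiableAt ℝ K.dφι x :=
  K.differentiableAt_of_contDiffOn (K.contDiffOn_fderiv_φ_pt _) hx

lemma differentiableAt_dφν (hx : x ∈ K.B) (α : Fin k) :
    DifferentiableAt ℝ (fun y => K.dφν y α) x :=
  K.differentiableAt_of_contDiffOn (K.contDiffOn_fderiv_φ_pt _) hx

lemma differentiableAt_dφN (hx : x ∈ K.B) (α : Fin k) (j : Fin 3) :
    DifferentiableAt ℝ (fun y => K.dφN y α j) x :=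
  K.differentiableAt_of_contDiffOn (K.contDiffOn_fderiv_φ_pt _) hx

lemma differentiableAt_ξc (hx : x ∈ K.B) : DifferentiableAt ℝ K.ξc x := by
  have := differentiableAt_φ_pt hx
  have := differentiableAt_ι hx
  have := differentiableAt_dφι hx
  have := differentiableAt_dφν hx
  have := differentiableAt_ν hx
  have := differentiableAt_dφN hx
  have := differentiableAt_Dν hx
  unfold ξc
  fun_prop

lemma pd_φ_pt (hx : x ∈ K.B) (i : Fin 3) :
    pd i (fun y => K.φ (K.pt y)) x
      = pd i K.ι x * K.dφι x + ∑ α, pd i (fun y => K.ν y α) x * K.dφν x α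
        + ∑ α, ∑ j, pd i (fun y => K.Dν y α j) x * K.dφN x α j + pd i K.η x * K.temp x :=
  fderiv_comp_apply_eq_sum_coord (K.hφ.differentiable (by simp)).differentiableAt
    (K.differentiableAt_of_contDiffOn K.contDiffOn_pt hx) _

lemma pd_ξc (hx : x ∈ K.B) (i : Fin 3) :
    pd i K.ξc x
      = K.temp x * pd i K.η x - K.ι x * pd i K.dφι x
        - ∑ α, pd i (fun y => K.dφν y α) x * K.ν x α
        - ∑ α, ∑ j, pd i (fun y => K.dφN y α j) x * K.Dν x α j := by
  have hφ := differentiableAt_φ_pt hx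
  have hι := differentiableAt_ι hx
  have hdφι := differentiableAt_dφι hx
  have hdφν := differentiableAt_dφν hx
  have hν := differentiableAt_ν hx
  have hdφN := differentiableAt_dφN hx
  have hDν := differentiableAt_Dν hx
  change pd i (fun y => K.φ (K.pt y) - K.ι y * K.dφι y - ∑ α, K.dφν y α * K.ν y α
    - ∑ α, ∑ j, K.dφN y α j * K.Dν y α j) x = _
  rw [pd_sub (by fun_prop) (by fun_prop), pd_sub (by fun_prop) (by fun_prop),
    pd_sub hφ (by fun_prop), pd_mul hι hdφι, pd_φ_pt hx,
    pd_sum_mul (fun α _ => hdφν α) (fun α _ => hν α), pd_sum (by fun_prop),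
    Finset.sum_congr rfl fun α _ => pd_sum_mul (fun j _ => hdφN α j) (fun j _ => hDν α j) i]
  simp only [Finset.sum_add_distrib, mul_comm (K.dφν x _), mul_comm (K.dφN x _ _)]
  ring

lemma pd_hc (hx : x ∈ K.B) (i : Fin 3) :
    pd i K.hc x = ∑ j, K.v x j * pd i (fun y => K.v y j) x + pd i K.ξc x := by
  have hv := differentiableAt_v hx
  have hhc : K.hc = fun y => 1 / 2 * ∑ j, K.v y j * K.v y j + K.ξc y := by
    funext y
    simp only [hc, sq]
  rw [hhc, pd_add (by fun_prop) (differentiableAt_ξc hx), pd_const_mul _ (by fun_prop),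
    pd_sum_mul (fun j _ => hv j) (fun j _ => hv j), Finset.mul_sum]
  congr 1
  exact Finset.sum_congr rfl fun j _ => by ring

lemma sum_pd_stress (hx : x ∈ K.B) (i : Fin 3) :
    ∑ j, pd j (fun y => -(K.ptil y) * (if i = j then (1:ℝ) else 0) - K.TE y i j) x
      = pd i K.dφι x - ∑ α, ∑ j, K.dφN x α j * pd j (fun y => K.Dν y α i) x
        - ∑ α, K.Dν x α i * ∑ j, pd j (fun y => K.dφN y α j) x := by
  have hDν := differentiableAt_Dν hx
  have hdφι := differentiableAt_dφι hx
  have hdφN := differentiableAt_dφN hx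
  have hterm (j : Fin 3) :
      pd j (fun y => -(K.ptil y) * (if i = j then (1:ℝ) else 0) - K.TE y i j) x
        = pd j K.dφι x * (if i = j then 1 else 0)
          - ∑ α, (pd j (fun y => K.Dν y α i) x * K.dφN x α j
            + K.Dν x α i * pd j (fun y => K.dφN y α j) x) := by
    have hTE : DifferentiableAt ℝ (fun y => K.TE y i j) x := by unfold TE; fun_prop
    simp only [ptil, neg_neg]
    rw [pd_sub (hdφι.mul_const _) hTE, pd_mul_const _ hdφι]
    exact congrArg _ (pd_sum_mul (fun α _ => hDν α i) (fun α _ => hdφN α j) j)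
  rw [Finset.sum_congr rfl fun j _ => hterm j, Finset.sum_sub_distrib]
  simp only [mul_ite, mul_one, mul_zero, Finset.sum_ite_eq, Finset.mem_univ, if_true,
    Finset.sum_add_distrib, Finset.mul_sum]
  rw [sub_sub, Finset.sum_comm,
    Finset.sum_comm (f := fun j α => K.Dν x α i * pd j (fun y => K.dφN y α j) x)]
  simp only [mul_comm (pd _ _ x) (K.dφN x _ _)]

lemma MomentumBalance.convective_eq (hbal : K.MomentumBalance) (hx : x ∈ K.B) (i : Fin 3) :
    ∑ j, pd j (fun y => K.v y i) x * K.v x j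
      = K.ι x * (pd i K.dφι x - ∑ α, ∑ j, K.dφN x α j * pd j (fun y => K.Dν y α i) x
        - ∑ α, K.Dν x α i * ∑ j, pd j (fun y => K.dφN y α j) x) := by
  rw [← sum_pd_stress hx, ← hbal x hx i, ι, inv_mul_cancel_left₀ (K.hρpos x hx).ne']

lemma SubstructuralBalance.pd_ι_mul_eq (hsub : K.SubstructuralBalance) (hx : x ∈ K.B)
    (i : Fin 3) (α : Fin k) :
    pd i (fun y => K.ι y * ((∑ j, pd j (fun w => K.S w α j) y)
        - (∑ j, K.v y j * pd j (fun w => K.dχνdot w α) y) + K.dχν y α)) x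
      = pd i (fun y => K.dφν y α) x := by
  refine pd_congr_of_eventuallyEq ?_ i
  filter_upwards [K.hB.mem_nhds hx] with y hy
  have hιz : K.ι y * K.z y α = K.dφν y α := by
    rw [ι, z, inv_mul_cancel_left₀ (K.hρpos y hy).ne']
  linear_combination K.ι y * hsub y hy α + hιz

end ComplexFluid

/-- Proposition 2, Crocco-type theorem for complex fluids, with
`∂_νφ` eliminated via the substructural balance: for a steady non-isentropic
flow of a complex fluid satisfying both the steady momentum balance
`ρ (Dv)v = div T`, `T = −p̃ I − T̄^E`, and the steady substructural balance
`div S − z = v·grad(∂_ν̇χ) − ∂_νχ`, at every point of `B` and for every `i`: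
`(ω × v)_i = ϑ ∂_iη − ∂_i h_c`
`  − Σ_α ∂_i( ι ( Σ_j ∂_j S_α^j − v·grad((∂_ν̇χ)_α) + (∂_νχ)_α ) ) ν^α`
`  − Σ_{α,j} ∂_i((∂_Nφ)_α^j) ∂_jν^α`
`  − ι Σ_α ∂_iν^α ( Σ_j ∂_j((∂_Nφ)_α^j) )`
`  − ι Σ_{α,j} (∂_Nφ)_α^j ∂_j∂_iν^α`. -/
theorem complexFluid_crocco
    {k : ℕ} (K : ComplexFluid k)
    (hbal : K.MomentumBalance) (hsub : K.SubstructuralBalance) :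
    ∀ x ∈ K.B, ∀ i : Fin 3,
      cross (curl K.v x) (K.v x) i
        = K.temp x * pd i K.η x
          - pd i K.hc x
          - (∑ α, pd i (fun y => K.ι y *
              ((∑ j, pd j (fun w => K.S w α j) y)
                - (∑ j, K.v y j * pd j (fun w => K.dχνdot w α) y)
                + K.dχν y α)) x * K.ν x α)
          - (∑ α, ∑ j, pd i (fun y => K.dφN y α j) x * K.Dν x α j)
          - K.ι x * (∑ α, K.Dν x α i * (∑ j, pd j (fun y => K.dφN y α j) x))
          - K.ι x * ∑ α, ∑ j, K.dφN x α j * pd j (fun y => K.Dν y α i) x := by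
  intro x hx i
  rw [cross_curl_apply, hbal.convective_eq hx i, K.pd_hc hx i, K.pd_ξc hx i]
  simp only [hsub.pd_ι_mul_eq hx i]
  ring
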